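/- arXiv:2307.01314 — 2 statements merged into one kernel-verified Lean document; each statement's English description precedes it below -/
import Mathlib

section
/- In any 2-2-2-2-2 configuration under the Modified CFLS coloring φ, no vertex is incident to edges of only two colors; that is, each of the five vertices is incident, within the configuration, to edges of at least three distinct colors. -/
namespace CFLS

/-- A vertex of `K_n` for `n = 2^(m^2)`: `m` blocks, each a string of `m` bits.
`x k` is the `k`-th block `x^(k+1)`, and `x k j` is its `j`-th bit (most significant first). -/
abbrev Vtx (m : ℕ) := Fin m → Fin m → Bool

/-- The `j`-th bit of a bit string (as a total function of `j : ℕ`). -/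
def bitAt {N : ℕ} (f : Fin N → Bool) (j : ℕ) : Bool :=
  if h : j < N then f ⟨j, h⟩ else false

/-- The value of a bit string read as a binary integer, most significant bit first. -/
def strToNat {N : ℕ} (f : Fin N → Bool) : ℕ :=
  ∑ j : Fin N, if f j then 2 ^ (N - 1 - j.val) else 0

/-- The `k`-th block of a vertex (as a total function of `k : ℕ`). -/
def blockAt {m : ℕ} (x : Vtx m) (k : ℕ) : Fin m → Bool :=
  if h : k < m then x ⟨k, h⟩ else fun _ => false

/-- The least block index at which `x` and `y` differ. -/
noncomputable def firstDiffBlock {m : ℕ} (x y : Vtx m) : ℕ :=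
  sInf {k | blockAt x k ≠ blockAt y k}

/-- The position (1-indexed) of the first bit at which two bit strings differ; `0` if equal. -/
noncomputable def firstDiffIdx {N : ℕ} (f g : Fin N → Bool) : ℕ :=
  if f = g then 0 else sInf {j | bitAt f j ≠ bitAt g j} + 1

/-- The value of a vertex read as a binary integer (concatenation of its blocks). -/
def vtxToNat {m : ℕ} (x : Vtx m) : ℕ :=
  ∑ k : Fin m, strToNat (x k) * (2 ^ m) ^ (m - 1 - k.val)

/-- The colors of the Modified CFLS coloring:
`((i, {x^(i), y^(i)}), i_1, …, i_m, δ_1, …, δ_m)`. -/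
abbrev Color (m : ℕ) := (ℕ × Set (Fin m → Bool)) × (Fin m → ℕ) × (Fin m → ℤ)

/-- The Modified CFLS color of the edge `xy` assuming `x ≤ y` as binary integers. -/
noncomputable def phiAux {m : ℕ} (x y : Vtx m) : Color m :=
  ((firstDiffBlock x y,
      {blockAt x (firstDiffBlock x y), blockAt y (firstDiffBlock x y)}),
   fun k => firstDiffIdx (x k) (y k),
   fun k => if strToNat (x k) ≤ strToNat (y k) then (1 : ℤ) else -1)

/-- The Modified CFLS coloring `φ`. -/
noncomputable def phi {m : ℕ} (x y : Vtx m) : Color m :=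
  if vtxToNat x ≤ vtxToNat y then phiAux x y else phiAux y x

/-- The ten edges among five vertices. -/
def edgeList {m : ℕ} (a b c d e : Vtx m) : List (Vtx m × Vtx m) :=
  [(a,b),(a,c),(a,d),(a,e),(b,c),(b,d),(b,e),(c,d),(c,e),(d,e)]

/-- The number of the ten edges among `a,b,c,d,e` receiving color `col` under `φ`. -/
noncomputable def colorCount {m : ℕ} (a b c d e : Vtx m) (col : Color m) : ℕ :=
  ((edgeList a b c d e).map fun p => phi p.1 p.2).countP fun x =>
    @decide (x = col) (Classical.propDecidable _)

/-- Five pairwise distinct vertices. -/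
def Distinct5 {m : ℕ} (a b c d e : Vtx m) : Prop :=
  a ≠ b ∧ a ≠ c ∧ a ≠ d ∧ a ≠ e ∧ b ≠ c ∧ b ≠ d ∧ b ≠ e ∧ c ≠ d ∧ c ≠ e ∧ d ≠ e

/-- `col` appears on some edge among `a,b,c,d,e`. -/
noncomputable def IsAttained {m : ℕ} (a b c d e : Vtx m) (col : Color m) : Prop :=
  colorCount a b c d e col ≠ 0

/-- A 2-2-2-2-2 configuration: five distinct vertices such that `φ` on the ten edges
among them takes exactly five values, each attained on exactly two edges. -/
def IsConfig22222 {m : ℕ} (a b c d e : Vtx m) : Prop :=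
  Distinct5 a b c d e ∧
  ∀ col : Color m, colorCount a b c d e col = 0 ∨ colorCount a b c d e col = 2

/-- The color class of `col` is a matching: two vertex-disjoint edges of color `col`. -/
def IsMatchingClass {m : ℕ} (a b c d e : Vtx m) (col : Color m) : Prop :=
  ∃ p ∈ edgeList a b c d e, ∃ q ∈ edgeList a b c d e,
    phi p.1 p.2 = col ∧ phi q.1 q.2 = col ∧
    p.1 ≠ q.1 ∧ p.1 ≠ q.2 ∧ p.2 ≠ q.1 ∧ p.2 ≠ q.2

/-- The color class of `col` is a path: two distinct edges of color `col` sharing a vertex. -/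
def IsPathClass {m : ℕ} (a b c d e : Vtx m) (col : Color m) : Prop :=
  ∃ p ∈ edgeList a b c d e, ∃ q ∈ edgeList a b c d e,
    p ≠ q ∧ phi p.1 p.2 = col ∧ phi q.1 q.2 = col ∧
    (p.1 = q.1 ∨ p.1 = q.2 ∨ p.2 = q.1 ∨ p.2 = q.2)


/-!
Suppose a vertex `v` of a 2-2-2-2-2 configuration sees only two colours. Every colour class has
exactly two edges, so the edges at `v` form two classes `{vu, vw}` and `{vp, vq}`. Equal colours
at `v` make `u` and `w` leave `v` at the same bit of every block, and at the same block towards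
the same new block. Comparing these data for `u` and `p` gives a block `κ` in which the four cross
edges `xy` (`x ∈ {u, w}`, `y ∈ {p, q}`) are all ordered alike, and shows that their colours differ
from those of `uw` and `pq`. Counting then gives `uw` and `pq` one colour and pairs up the cross
edges. Let `t` be the block where `uw` and `pq` split. Two cross edges at a common vertex cannot
share a colour, since `i_t` vanishes on only one of them; in the remaining pairing one of the two
pairs is ordered alike at `κ` but oppositely at `t`, so `δ_κ` and `δ_t` cannot both agree.
-/

section Pairing

variable {α C : Type*} {col : α → C} {E F : Set α}

def IsPairedOn (col : α → C) (E : Set α) : Prop :=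
  ∀ e ∈ E, {e' ∈ E | col e' = col e}.ncard = 2

theorem IsPairedOn.exists_class (h : IsPairedOn col E) {e : α} (he : e ∈ E) :
    ∃ x y, x ≠ y ∧ ∀ z, z ∈ E ∧ col z = col e ↔ z = x ∨ z = y := by
  obtain ⟨x, y, hxy, hclass⟩ := Set.ncard_eq_two.1 (h e he)
  exact ⟨x, y, hxy, fun z => by simpa using Set.ext_iff.1 hclass z⟩

theorem IsPairedOn.exists_ne (h : IsPairedOn col E) {e : α} (he : e ∈ E) :
    ∃ e' ∈ E, e' ≠ e ∧ col e' = col e := by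
  obtain ⟨x, y, hxy, hclass⟩ := h.exists_class he
  rcases (hclass e).1 ⟨he, rfl⟩ with rfl | rfl
  · exact ⟨y, ((hclass y).2 (Or.inr rfl)).1, hxy.symm, ((hclass y).2 (Or.inr rfl)).2⟩
  · exact ⟨x, ((hclass x).2 (Or.inl rfl)).1, hxy, ((hclass x).2 (Or.inl rfl)).2⟩

theorem IsPairedOn.eq_or_eq (h : IsPairedOn col E) {e e' e'' : α} (he : e ∈ E) (he' : e' ∈ E)
    (he'' : e'' ∈ E) (hne : e' ≠ e) (hc' : col e' = col e) (hc'' : col e'' = col e) :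
    e'' = e ∨ e'' = e' := by
  obtain ⟨x, y, -, hclass⟩ := h.exists_class he
  have := (hclass e).1 ⟨he, rfl⟩
  have := (hclass e').1 ⟨he', hc'⟩
  have := (hclass e'').1 ⟨he'', hc''⟩
  grind

theorem IsPairedOn.col_ne (h : IsPairedOn col E) {a b c : α} (ha : a ∈ E) (hb : b ∈ E)
    (hc : c ∈ E) (hba : b ≠ a) (hca : c ≠ a) (hcb : c ≠ b) (hab : col b = col a) :
    col c ≠ col a :=
  fun hac => (h.eq_or_eq ha hb hc hba hab hac).elim hca hcb

theorem IsPairedOn.of_subset (h : IsPairedOn col E) (hFE : F ⊆ E)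
    (hF : ∀ e ∈ F, ∀ e' ∈ E, col e' = col e → e' ∈ F) : IsPairedOn col F := by
  intro e he
  convert h e (hFE he) using 2
  exact Set.ext fun e' => ⟨fun h' => ⟨hFE h'.1, h'.2⟩, fun h' => ⟨hF e he e' h'.1 h'.2, h'.2⟩⟩

theorem IsPairedOn.four {e₁ e₂ e₃ e₄ : α} (h : IsPairedOn col {e₁, e₂, e₃, e₄})
    (hne : [e₁, e₂, e₃, e₄].Nodup) :
    col e₁ = col e₂ ∧ col e₃ = col e₄ ∧ col e₁ ≠ col e₃ ∨
      col e₁ = col e₃ ∧ col e₂ = col e₄ ∧ col e₁ ≠ col e₂ ∨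
      col e₁ = col e₄ ∧ col e₂ = col e₃ ∧ col e₁ ≠ col e₂ := by
  have h₁ : e₁ ∈ ({e₁, e₂, e₃, e₄} : Set α) := by simp
  have h₂ : e₂ ∈ ({e₁, e₂, e₃, e₄} : Set α) := by simp
  have h₃ : e₃ ∈ ({e₁, e₂, e₃, e₄} : Set α) := by simp
  have h₄ : e₄ ∈ ({e₁, e₂, e₃, e₄} : Set α) := by simp
  simp only [List.nodup_cons, List.mem_cons, List.not_mem_nil, or_false, not_or] at hne
  obtain ⟨⟨h₁₂, h₁₃, h₁₄⟩, ⟨h₂₃, h₂₄⟩, h₃₄, -⟩ := hne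
  obtain ⟨x, hx, hx₁, hcx⟩ := h.exists_ne h₁
  obtain ⟨y, hy, hy₂, hcy⟩ := h.exists_ne h₂
  obtain ⟨z, hz, hz₃, hcz⟩ := h.exists_ne h₃
  simp only [Set.mem_insert_iff, Set.mem_singleton_iff] at hx hy hz
  have := h.col_ne h₁ h₂ h₃ (Ne.symm h₁₂) (Ne.symm h₁₃) (Ne.symm h₂₃)
  have := h.col_ne h₁ h₂ h₄ (Ne.symm h₁₂) (Ne.symm h₁₄) (Ne.symm h₂₄)
  have := h.col_ne h₁ h₃ h₄ (Ne.symm h₁₃) (Ne.symm h₁₄) (Ne.symm h₃₄)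
  have := h.col_ne h₂ h₃ h₄ (Ne.symm h₂₃) (Ne.symm h₂₄) (Ne.symm h₃₄)
  grind

open Classical in
theorem isPairedOn_of_countP {l : List α} (hl : l.Nodup)
    (h : ∀ c, l.countP (fun e => col e = c) = 0 ∨ l.countP (fun e => col e = c) = 2) :
    IsPairedOn col {e | e ∈ l} := by
  intro e he
  have hclass : {e' ∈ {e | e ∈ l} | col e' = col e} =
      ↑(l.filter fun e' => col e' = col e).toFinset := by
    ext
    simp
  rw [hclass, Set.ncard_coe_finset, List.toFinset_card_of_nodup (hl.filter _),
    ← List.countP_eq_length_filter]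
  refine (h (col e)).resolve_left fun h0 => ?_
  exact (List.countP_pos_iff.2 ⟨e, he, by simp⟩).ne' h0

end Pairing

section Edges

variable {V C : Type*} {col : Sym2 V → C}

def edgesOn (S : Set V) : Set (Sym2 V) := {e ∈ S.sym2 | ¬e.IsDiag}

@[simp]
theorem mk_mem_edgesOn {S : Set V} {x y : V} :
    s(x, y) ∈ edgesOn S ↔ (x ∈ S ∧ y ∈ S) ∧ x ≠ y := by
  simp [edgesOn]

theorem mem_of_mem_edgesOn {S : Set V} {e : Sym2 V} {x : V} (he : e ∈ edgesOn S) (hx : x ∈ e) :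
    x ∈ S :=
  Set.mem_sym2_iff_subset.1 he.1 hx

theorem edgesOn_mono {S T : Set V} (h : S ⊆ T) : edgesOn S ⊆ edgesOn T :=
  fun _ he => ⟨Set.mem_sym2_iff_subset.2 ((Set.mem_sym2_iff_subset.1 he.1).trans h), he.2⟩

theorem mem_edgesOn_of_mem_insert {S : Set V} {e : Sym2 V} {v : V}
    (he : e ∈ edgesOn (insert v S)) (hv : v ∉ e) : e ∈ edgesOn S := by
  induction e using Sym2.ind with | h x y => ?_
  simp only [mk_mem_edgesOn, Set.mem_insert_iff, Sym2.mem_iff, not_or] at he hv ⊢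
  grind

theorem exists_eq_insert_of_mem {a b c d e v : V} (hv : v ∈ ({a, b, c, d, e} : Set V))
    (hS : [a, b, c, d, e].Nodup) : ∃ n₁ n₂ n₃ n₄,
      ({a, b, c, d, e} : Set V) = {v, n₁, n₂, n₃, n₄} ∧ [v, n₁, n₂, n₃, n₄].Nodup := by
  classical
  have hl : v ∈ [a, b, c, d, e] := by simpa using hv
  obtain ⟨n₁, n₂, n₃, n₄, hrest⟩ := List.length_eq_four.1
    (by simp [List.length_erase_of_mem hl] : ([a, b, c, d, e].erase v).length = 4)
  have hperm := List.perm_cons_erase hl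
  rw [hrest] at hperm
  exact ⟨n₁, n₂, n₃, n₄, Set.ext fun x => by simpa using hperm.mem_iff (a := x),
    hperm.nodup_iff.1 hS⟩

theorem IsPairedOn.star_pairs {v n₁ n₂ n₃ n₄ : V}
    (hP : IsPairedOn col (edgesOn {v, n₁, n₂, n₃, n₄})) (hS : [v, n₁, n₂, n₃, n₄].Nodup)
    (htwo : ∀ a ∈ ({n₁, n₂, n₃, n₄} : Set V), ∀ b ∈ ({n₁, n₂, n₃, n₄} : Set V),
      ∀ c ∈ ({n₁, n₂, n₃, n₄} : Set V), a ≠ b → a ≠ c → b ≠ c →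
        col s(v, a) = col s(v, b) ∨ col s(v, a) = col s(v, c) ∨ col s(v, b) = col s(v, c)) :
    col s(v, n₁) = col s(v, n₂) ∧ col s(v, n₃) = col s(v, n₄) ∧ col s(v, n₁) ≠ col s(v, n₃) ∨
      col s(v, n₁) = col s(v, n₃) ∧ col s(v, n₂) = col s(v, n₄) ∧ col s(v, n₁) ≠ col s(v, n₂) ∨
      col s(v, n₁) = col s(v, n₄) ∧ col s(v, n₂) = col s(v, n₃) ∧ col s(v, n₁) ≠ col s(v, n₂) := by
  simp only [List.nodup_cons, List.mem_cons, List.not_mem_nil, or_false, not_or] at hS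
  obtain ⟨⟨h₁, h₂, h₃, h₄⟩, ⟨h₁₂, h₁₃, h₁₄⟩, ⟨h₂₃, h₂₄⟩, h₃₄, -⟩ := hS
  have m₁ : s(v, n₁) ∈ edgesOn {v, n₁, n₂, n₃, n₄} := by simp [h₁]
  have m₂ : s(v, n₂) ∈ edgesOn {v, n₁, n₂, n₃, n₄} := by simp [h₂]
  have m₃ : s(v, n₃) ∈ edgesOn {v, n₁, n₂, n₃, n₄} := by simp [h₃]
  have m₄ : s(v, n₄) ∈ edgesOn {v, n₁, n₂, n₃, n₄} := by simp [h₄]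
  have ne : ∀ {a b : V}, a ≠ b → s(v, b) ≠ s(v, a) := fun hab h => hab (Sym2.congr_right.1 h).symm
  have := htwo n₁ (by simp) n₂ (by simp) n₃ (by simp) h₁₂ h₁₃ h₂₃
  have := htwo n₁ (by simp) n₂ (by simp) n₄ (by simp) h₁₂ h₁₄ h₂₄
  have := htwo n₁ (by simp) n₃ (by simp) n₄ (by simp) h₁₃ h₁₄ h₃₄
  have := htwo n₂ (by simp) n₃ (by simp) n₄ (by simp) h₂₃ h₂₄ h₃₄
  have := hP.col_ne m₁ m₂ m₃ (ne h₁₂) (ne h₁₃) (ne h₂₃)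
  have := hP.col_ne m₁ m₂ m₄ (ne h₁₂) (ne h₁₄) (ne h₂₄)
  have := hP.col_ne m₁ m₃ m₄ (ne h₁₃) (ne h₁₄) (ne h₃₄)
  have := hP.col_ne m₂ m₃ m₄ (ne h₂₃) (ne h₂₄) (ne h₃₄)
  grind

theorem IsPairedOn.of_edgesOn_insert {v u w p q : V}
    (hP : IsPairedOn col (edgesOn {v, u, w, p, q})) (hS : [v, u, w, p, q].Nodup)
    (hu : col s(v, u) = col s(v, w)) (hp : col s(v, p) = col s(v, q)) :
    IsPairedOn col (edgesOn {u, w, p, q}) := by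
  simp only [List.nodup_cons, List.mem_cons, List.not_mem_nil, or_false, not_or] at hS
  obtain ⟨⟨hvu, hvw, hvp, hvq⟩, ⟨huw, -, -⟩, -, hpq, -⟩ := hS
  have hvT : v ∉ ({u, w, p, q} : Set V) := by simp [*]
  have hmem : ∀ {a}, a ∈ ({u, w, p, q} : Set V) → s(v, a) ∈ edgesOn {v, u, w, p, q} := fun ha =>
    mk_mem_edgesOn.2 ⟨⟨Set.mem_insert _ _, Set.mem_insert_of_mem _ ha⟩, fun h => hvT (h ▸ ha)⟩
  refine hP.of_subset (edgesOn_mono (Set.subset_insert _ _)) fun e he e' he' hc => ?_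
  by_cases hve' : v ∉ e'
  · exact mem_edgesOn_of_mem_insert he' hve'
  exfalso
  -- `v ∉ e`, so `e` is in neither colour class at `v`
  have star : ∀ {a b}, a ∈ ({u, w, p, q} : Set V) → b ∈ ({u, w, p, q} : Set V) → a ≠ b →
      col s(v, a) = col s(v, b) → col s(v, a) ≠ col e := fun ha hb hab hcol hce => by
    rcases hP.eq_or_eq (hmem ha) (hmem hb) (edgesOn_mono (Set.subset_insert _ _) he)
      (fun h => hab (Sym2.congr_right.1 h).symm) hcol.symm hce.symm with rfl | rfl <;>
      exact hvT (mem_of_mem_edgesOn he (by simp))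
  obtain ⟨x, rfl⟩ := Sym2.mem_iff_exists.1 (not_not.1 hve')
  have hx : x ∈ ({u, w, p, q} : Set V) := by
    simp only [mk_mem_edgesOn, Set.mem_insert_iff] at he'
    grind
  simp only [Set.mem_insert_iff, Set.mem_singleton_iff] at hx
  rcases hx with rfl | rfl | rfl | rfl
  · exact star (by simp) (by simp) huw hu hc
  · exact star (by simp) (by simp) (Ne.symm huw) hu.symm hc
  · exact star (by simp) (by simp) hpq hp hc
  · exact star (by simp) (by simp) (Ne.symm hpq) hp.symm hc

theorem IsPairedOn.cross_pairing {u w p q : V} (hP : IsPairedOn col (edgesOn {u, w, p, q}))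
    (hS : [u, w, p, q].Nodup)
    (hcross : ∀ x ∈ ({u, w} : Set V), ∀ y ∈ ({p, q} : Set V),
      col s(x, y) ≠ col s(u, w) ∧ col s(x, y) ≠ col s(p, q)) :
    col s(u, w) = col s(p, q) ∧
      (col s(u, p) = col s(u, q) ∧ col s(w, p) = col s(w, q) ∧ col s(u, p) ≠ col s(w, p) ∨
        col s(u, p) = col s(w, p) ∧ col s(u, q) = col s(w, q) ∧ col s(u, p) ≠ col s(u, q) ∨
        col s(u, p) = col s(w, q) ∧ col s(u, q) = col s(w, p) ∧ col s(u, p) ≠ col s(u, q)) := by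
  simp only [List.nodup_cons, List.mem_cons, List.not_mem_nil, or_false, not_or] at hS
  obtain ⟨⟨huw, hup, huq⟩, ⟨hwp, hwq⟩, hpq, -⟩ := hS
  set cross : Set (Sym2 V) := {s(u, p), s(u, q), s(w, p), s(w, q)}
  have enum : ∀ e ∈ edgesOn {u, w, p, q}, e = s(u, w) ∨ e = s(p, q) ∨ e ∈ cross := by
    intro e he
    induction e using Sym2.ind with | h x y => ?_
    simp only [cross, mk_mem_edgesOn, Set.mem_insert_iff, Set.mem_singleton_iff] at he ⊢
    grind [Sym2.eq_swap]
  have cross_ne : ∀ e ∈ cross, col e ≠ col s(u, w) ∧ col e ≠ col s(p, q) := by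
    simp only [cross, Set.mem_insert_iff, Set.mem_singleton_iff]
    rintro e (rfl | rfl | rfl | rfl) <;> apply hcross <;> simp
  have cross_sub : cross ⊆ edgesOn {u, w, p, q} := by
    simp only [cross, Set.insert_subset_iff, Set.singleton_subset_iff]
    simp [*]
  refine ⟨?_, IsPairedOn.four (hP.of_subset cross_sub fun e he e' he' hc => ?_) (by simp [*])⟩
  · obtain ⟨e', he', hne, hc⟩ := hP.exists_ne (e := s(u, w)) (by simp [huw])
    rcases enum e' he' with rfl | rfl | hx
    · exact absurd rfl hne
    · exact hc.symm
    · exact absurd hc (cross_ne e' hx).1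
  · rcases enum e' he' with rfl | rfl | hx
    · exact absurd hc.symm (cross_ne e he).1
    · exact absurd hc.symm (cross_ne e he).2
    · exact hx

end Edges

section Digits

theorem sum_digits_lt_pow {M B : ℕ} {d : Fin M → ℕ} (hd : ∀ k, d k < B) :
    ∑ k : Fin M, d k * B ^ (M - 1 - k) < B ^ M := by
  induction M with
  | zero => simp
  | succ M ih =>
    rw [Fin.sum_univ_succ]
    have htail := ih (d := fun k => d k.succ) fun k => hd k.succ
    simp only [Fin.val_zero, Fin.val_succ, Nat.add_sub_cancel, Nat.sub_zero] at htail ⊢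
    have hexp : ∀ k : Fin M, M - (k + 1) = M - 1 - k := fun k => by omega
    simp only [hexp]
    calc d 0 * B ^ M + ∑ k : Fin M, d k.succ * B ^ (M - 1 - k)
        < d 0 * B ^ M + B ^ M := by omega
      _ = (d 0 + 1) * B ^ M := by ring
      _ ≤ B * B ^ M := Nat.mul_le_mul_right _ (hd 0)
      _ = B ^ (M + 1) := by ring

theorem sum_digits_lt_sum_digits {M B : ℕ} {d e : Fin M → ℕ} (hd : ∀ k, d k < B) (s : Fin M)
    (hagree : ∀ k < s, d k = e k) (hlt : d s < e s) :
    ∑ k : Fin M, d k * B ^ (M - 1 - k) < ∑ k : Fin M, e k * B ^ (M - 1 - k) := by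
  induction M with
  | zero => exact s.elim0
  | succ M ih =>
    simp only [Fin.sum_univ_succ, Fin.val_zero, Fin.val_succ, Nat.add_sub_cancel, Nat.sub_zero]
    have hexp : ∀ k : Fin M, M - (k + 1) = M - 1 - k := fun k => by omega
    simp only [hexp]
    rcases Fin.eq_zero_or_eq_succ s with rfl | ⟨s, rfl⟩
    · have htail := sum_digits_lt_pow (d := fun k : Fin M => d k.succ) fun k => hd k.succ
      have : d 0 * B ^ M + B ^ M ≤ e 0 * B ^ M := by
        simpa [add_mul] using Nat.mul_le_mul_right (B ^ M) hlt
      omega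
    · have := ih (d := fun k => d k.succ) (e := fun k => e k.succ) (fun k => hd k.succ) s
        (fun k hk => hagree k.succ (Fin.succ_lt_succ_iff.2 hk)) hlt
      rw [hagree 0 s.succ_pos]
      omega

end Digits

section FirstDiff

variable {α : Type*} {N : ℕ} {f g : Fin N → α} {s t : Fin N}

def IsFirstDiff (f g : Fin N → α) (s : Fin N) : Prop :=
  f s ≠ g s ∧ ∀ j < s, f j = g j

theorem IsFirstDiff.ne (hs : IsFirstDiff f g s) : f ≠ g := fun e => hs.1 (e ▸ rfl)

theorem IsFirstDiff.symm (hs : IsFirstDiff f g s) : IsFirstDiff g f s :=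
  ⟨hs.1.symm, fun j hj => (hs.2 j hj).symm⟩

theorem IsFirstDiff.unique (hs : IsFirstDiff f g s) (ht : IsFirstDiff f g t) : s = t := by
  rcases lt_trichotomy s t with hst | rfl | hts
  exacts [absurd (ht.2 s hst) hs.1, rfl, absurd (hs.2 t hts) ht.1]

theorem exists_isFirstDiff (hfg : f ≠ g) : ∃ s, IsFirstDiff f g s := by
  obtain ⟨j, hj⟩ := Function.ne_iff.1 hfg
  obtain ⟨s, hs, hmin⟩ := WellFounded.has_min wellFounded_lt {j | f j ≠ g j} ⟨j, hj⟩
  exact ⟨s, hs, fun j hj => not_not.1 fun hne => hmin j hne hj⟩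

/-- `bitAt` and `blockAt` pad strings with a default value, which the first difference never
reaches. -/
theorem IsFirstDiff.sInf_eq {d : α} (hs : IsFirstDiff f g s) :
    sInf {j : ℕ | (if hj : j < N then f ⟨j, hj⟩ else d) ≠ (if hj : j < N then g ⟨j, hj⟩ else d)}
      = s := by
  refine IsLeast.csInf_eq ⟨by simpa using hs.1, fun j hj => not_lt.1 fun hjs => hj ?_⟩
  have hjN : j < N := hjs.trans s.isLt
  simpa [hjN] using hs.2 ⟨j, hjN⟩ hjs

end FirstDiff

section Bits

variable {N : ℕ} {f g h : Fin N → Bool} {s t : Fin N}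

theorem firstDiffIdx_eq_zero_iff : firstDiffIdx f g = 0 ↔ f = g := by
  unfold firstDiffIdx
  split <;> simp_all

theorem IsFirstDiff.firstDiffIdx_eq (hs : IsFirstDiff f g s) : firstDiffIdx f g = s + 1 := by
  rw [firstDiffIdx, if_neg hs.ne]
  unfold bitAt
  rw [hs.sInf_eq]

theorem firstDiffIdx_eq_succ_iff : firstDiffIdx f g = s + 1 ↔ IsFirstDiff f g s := by
  refine ⟨fun h => ?_, IsFirstDiff.firstDiffIdx_eq⟩
  have hfg : f ≠ g := fun e => by simp [firstDiffIdx_eq_zero_iff.2 e] at h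
  obtain ⟨t, ht⟩ := exists_isFirstDiff hfg
  have hts : t = s := Fin.ext (by have := ht.firstDiffIdx_eq; omega)
  exact hts ▸ ht

theorem firstDiffIdx_comm (f g : Fin N → Bool) : firstDiffIdx f g = firstDiffIdx g f := by
  by_cases hfg : f = g
  · rw [hfg]
  · obtain ⟨s, hs⟩ := exists_isFirstDiff hfg
    rw [hs.firstDiffIdx_eq, hs.symm.firstDiffIdx_eq]

theorem IsFirstDiff.apply_eq_not (hs : IsFirstDiff f g s) : g s = !f s := by
  have := hs.1
  revert this
  cases f s <;> cases g s <;> simp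

theorem IsFirstDiff.eq_of_le (hg : IsFirstDiff f g s) (hh : IsFirstDiff f h s) :
    ∀ j ≤ s, g j = h j := by
  intro j hj
  rcases hj.lt_or_eq with hj | rfl
  · exact (hg.2 j hj).symm.trans (hh.2 j hj)
  · rw [hg.apply_eq_not, hh.apply_eq_not]

theorem firstDiffIdx_eq_zero_or_lt (hg : IsFirstDiff f g s) (hh : IsFirstDiff f h s) :
    firstDiffIdx g h = 0 ∨ s + 1 < firstDiffIdx g h := by
  by_cases hgh : g = h
  · exact Or.inl (firstDiffIdx_eq_zero_iff.2 hgh)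
  obtain ⟨t, ht⟩ := exists_isFirstDiff hgh
  have : s < t := not_le.1 fun hts => ht.1 (hg.eq_of_le hh t hts)
  rw [ht.firstDiffIdx_eq]
  exact Or.inr (by simpa using this)

theorem IsFirstDiff.of_firstDiffIdx_eq {M : ℕ} {v u p : Fin M → Fin N → Bool} {i : Fin M}
    (hu : IsFirstDiff v u i) (hall : ∀ k, firstDiffIdx (v k) (u k) = firstDiffIdx (v k) (p k)) :
    IsFirstDiff v p i :=
  ⟨fun h => hu.1 (by rw [← firstDiffIdx_eq_zero_iff, hall, firstDiffIdx_eq_zero_iff, h]),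
    fun k hk => by rw [← firstDiffIdx_eq_zero_iff, ← hall, firstDiffIdx_eq_zero_iff, hu.2 k hk]⟩

theorem IsFirstDiff.fork (hg : IsFirstDiff f g s) (hh : IsFirstDiff f h t) (hst : s < t) :
    IsFirstDiff g h s :=
  ⟨by rw [← hh.2 s hst]; exact hg.1.symm,
    fun j hj => (hg.2 j hj).symm.trans (hh.2 j (hj.trans hst))⟩

end Bits

section Order

variable {N m : ℕ} {f g h : Fin N → Bool} {s : Fin N}

theorem strToNat_eq_sum_digits (f : Fin N → Bool) :
    strToNat f = ∑ j : Fin N, (f j).toNat * 2 ^ (N - 1 - j) := by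
  unfold strToNat
  congr with j
  cases f j <;> simp

theorem strToNat_lt_two_pow (f : Fin N → Bool) : strToNat f < 2 ^ N := by
  rw [strToNat_eq_sum_digits]
  exact sum_digits_lt_pow fun j => Bool.toNat_lt _

theorem IsFirstDiff.strToNat_lt (hs : IsFirstDiff f g s) (hf : f s = false) :
    strToNat f < strToNat g := by
  have hg : g s = true := by rw [hs.apply_eq_not, hf]; rfl
  rw [strToNat_eq_sum_digits, strToNat_eq_sum_digits]
  exact sum_digits_lt_sum_digits (fun j => Bool.toNat_lt _) s (fun j hj => by rw [hs.2 j hj])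
    (by simp [hf, hg])

theorem IsFirstDiff.strToNat_lt_iff (hs : IsFirstDiff f g s) :
    strToNat f < strToNat g ↔ f s = false := by
  cases hf : f s
  · simpa using hs.strToNat_lt hf
  · have hg : g s = false := by rw [hs.apply_eq_not, hf]; rfl
    simpa using (hs.symm.strToNat_lt hg).le

theorem strToNat_injective : Function.Injective (strToNat (N := N)) := by
  intro f g hfg
  by_contra hne
  obtain ⟨s, hs⟩ := exists_isFirstDiff hne
  cases hf : f s
  · exact (hs.strToNat_lt hf).ne hfg
  · exact (hs.symm.strToNat_lt (by rw [hs.apply_eq_not, hf]; rfl)).ne hfg.symm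

theorem strToNat_lt_iff_of_firstDiffIdx_eq (hfgh : firstDiffIdx f g = firstDiffIdx f h) :
    strToNat f < strToNat g ↔ strToNat f < strToNat h := by
  by_cases hfg : f = g
  · subst hfg
    obtain rfl : f = h := firstDiffIdx_eq_zero_iff.1 (hfgh ▸ firstDiffIdx_eq_zero_iff.2 rfl)
    rfl
  obtain ⟨s, hs⟩ := exists_isFirstDiff hfg
  have hs' : IsFirstDiff f h s := firstDiffIdx_eq_succ_iff.1 (hfgh ▸ hs.firstDiffIdx_eq)
  rw [hs.strToNat_lt_iff, hs'.strToNat_lt_iff]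

theorem IsFirstDiff.vtxToNat_lt {x y : Vtx m} {i : Fin m} (hi : IsFirstDiff x y i)
    (hlt : strToNat (x i) < strToNat (y i)) : vtxToNat x < vtxToNat y :=
  sum_digits_lt_sum_digits (fun _ => strToNat_lt_two_pow _) i (fun k hk => by rw [hi.2 k hk]) hlt

theorem IsFirstDiff.vtxToNat_lt_iff {x y : Vtx m} {i : Fin m} (hi : IsFirstDiff x y i) :
    vtxToNat x < vtxToNat y ↔ strToNat (x i) < strToNat (y i) := by
  refine ⟨fun hxy => ?_, hi.vtxToNat_lt⟩
  refine (lt_or_gt_of_ne (strToNat_injective.ne hi.1)).resolve_right fun hyx => ?_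
  exact (hi.symm.vtxToNat_lt hyx).asymm hxy

theorem vtxToNat_injective : Function.Injective (vtxToNat (m := m)) := by
  intro x y hxy
  by_contra hne
  obtain ⟨i, hi⟩ := exists_isFirstDiff hne
  rcases lt_or_gt_of_ne (strToNat_injective.ne hi.1) with h | h
  exacts [(hi.vtxToNat_lt h).ne hxy, (hi.symm.vtxToNat_lt h).ne hxy.symm]

end Order

section Coloring

variable {m : ℕ} {v u w p q x y z : Vtx m} {i t κ : Fin m}

theorem IsFirstDiff.firstDiffBlock_eq (hi : IsFirstDiff x y i) : firstDiffBlock x y = i := by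
  unfold firstDiffBlock blockAt
  exact hi.sInf_eq

theorem firstDiffBlock_comm (x y : Vtx m) : firstDiffBlock x y = firstDiffBlock y x := by
  simp only [firstDiffBlock, ne_comm]

theorem firstDiffBlock_ne_of_apply_eq (hxy : x ≠ y) (hi : x i = y i) : firstDiffBlock x y ≠ i := by
  obtain ⟨j, hj⟩ := exists_isFirstDiff hxy
  rw [hj.firstDiffBlock_eq]
  exact fun hji => hj.1 (Fin.ext hji ▸ hi)

theorem blockAt_val (x : Vtx m) (i : Fin m) : blockAt x i = x i := by
  simp [blockAt]

/-- `δ_k = +1` on the edge `xy`, in a form that does not depend on the orientation of the edge. -/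
def DeltaPos (x y : Vtx m) (k : Fin m) : Prop :=
  x k = y k ∨ (vtxToNat x < vtxToNat y ↔ strToNat (x k) < strToNat (y k))

instance (x y : Vtx m) (k : Fin m) : Decidable (DeltaPos x y k) := by
  unfold DeltaPos
  infer_instance

theorem phi_eq_components (x y : Vtx m) :
    phi x y =
      ((firstDiffBlock x y, {blockAt x (firstDiffBlock x y), blockAt y (firstDiffBlock x y)}),
        fun k => firstDiffIdx (x k) (y k), fun k => if DeltaPos x y k then 1 else -1) := by
  rcases eq_or_ne x y with rfl | hxy
  · simp [phi, phiAux, DeltaPos]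
  have hlt := vtxToNat_injective.ne hxy
  unfold phi phiAux DeltaPos
  simp only [← strToNat_injective.eq_iff (a := x _)]
  split_ifs with hle
  · refine Prod.ext rfl (Prod.ext rfl (funext fun k => ?_))
    dsimp only
    split_ifs <;> first | rfl | omega
  · refine Prod.ext (Prod.ext (firstDiffBlock_comm y x) ?_) (Prod.ext ?_ (funext fun k => ?_))
    · rw [firstDiffBlock_comm y x, Set.pair_comm]
    · exact funext fun k => firstDiffIdx_comm _ _
    · dsimp only
      split_ifs <;> first | rfl | omega

theorem phi_eq_iff : phi x y = phi z w ↔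
    firstDiffBlock x y = firstDiffBlock z w ∧
    ({blockAt x (firstDiffBlock x y), blockAt y (firstDiffBlock x y)} : Set (Fin m → Bool)) =
      {blockAt z (firstDiffBlock z w), blockAt w (firstDiffBlock z w)} ∧
    (∀ k, firstDiffIdx (x k) (y k) = firstDiffIdx (z k) (w k)) ∧
    ∀ k, (DeltaPos x y k ↔ DeltaPos z w k) := by
  have hsign : ∀ k, ((if DeltaPos x y k then 1 else -1 : ℤ) = if DeltaPos z w k then 1 else -1) ↔
      (DeltaPos x y k ↔ DeltaPos z w k) := fun k => by
    split_ifs <;> simp_all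
  simp only [phi_eq_components, Prod.mk.injEq, funext_iff, hsign, and_assoc]

theorem phi_comm (x y : Vtx m) : phi x y = phi y x := by
  rcases eq_or_ne x y with rfl | hxy
  · rfl
  unfold phi
  rcases lt_or_gt_of_ne (vtxToNat_injective.ne hxy) with h | h
  · rw [if_pos h.le, if_neg (not_le.2 h)]
  · rw [if_neg (not_le.2 h), if_pos h.le]

noncomputable def edgeColor : Sym2 (Vtx m) → Color m := Sym2.lift ⟨phi, phi_comm⟩

@[simp]
theorem edgeColor_mk (x y : Vtx m) : edgeColor s(x, y) = phi x y := rfl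

theorem IsFirstDiff.pair_eq_of_phi_eq (ht : IsFirstDiff x y t) (h : phi x y = phi z w) :
    x t = z t ∧ y t = w t ∨ x t = w t ∧ y t = z t := by
  have hpair := (phi_eq_iff.1 h).2.1
  rw [← (phi_eq_iff.1 h).1, ht.firstDiffBlock_eq] at hpair
  simpa only [blockAt_val, Set.pair_eq_pair_iff] using hpair

theorem exists_isFirstDiff_of_phi_eq (hvu : v ≠ u) (h : phi v u = phi v w) :
    ∃ i, IsFirstDiff v u i ∧ IsFirstDiff v w i ∧ u i = w i := by
  obtain ⟨i, hi⟩ := exists_isFirstDiff hvu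
  refine ⟨i, hi, hi.of_firstDiffIdx_eq (phi_eq_iff.1 h).2.2.1, ?_⟩
  rcases hi.pair_eq_of_phi_eq h with ⟨-, h'⟩ | ⟨-, h'⟩
  exacts [h', absurd h'.symm hi.1]

theorem phi_eq_of_firstDiffIdx_eq (hu : IsFirstDiff v u i) (hup : u i = p i)
    (hall : ∀ k, firstDiffIdx (v k) (u k) = firstDiffIdx (v k) (p k)) : phi v u = phi v p := by
  have hp := hu.of_firstDiffIdx_eq hall
  refine phi_eq_iff.2 ⟨by rw [hu.firstDiffBlock_eq, hp.firstDiffBlock_eq], ?_, hall, fun k => ?_⟩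
  · simp only [hu.firstDiffBlock_eq, hp.firstDiffBlock_eq, blockAt_val, hup]
  · simp only [DeltaPos, ← firstDiffIdx_eq_zero_iff, hall k, hu.vtxToNat_lt_iff,
      hp.vtxToNat_lt_iff, hup, strToNat_lt_iff_of_firstDiffIdx_eq (hall k)]

/-- `i_t` vanishes on exactly one of the two edges. -/
theorem phi_ne_of_apply_eq (hx : x t = y t ∨ x t = z t) (hyz : y t ≠ z t) :
    phi x y ≠ phi x z := by
  intro h
  have hidx := (phi_eq_iff.1 h).2.2.1 t
  rcases hx with hxy | hxz
  · rw [firstDiffIdx_eq_zero_iff.2 hxy, eq_comm, firstDiffIdx_eq_zero_iff] at hidx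
    exact hyz (hxy.symm.trans hidx)
  · rw [firstDiffIdx_eq_zero_iff.2 hxz, firstDiffIdx_eq_zero_iff] at hidx
    exact hyz (hidx.symm.trans hxz)

/-- At `κ` the two edges are ordered alike, at `t` oppositely, so `δ_κ` and `δ_t` cannot both
agree. -/
theorem phi_ne_of_crossed {σ : Prop} (hxyκ : x κ ≠ y κ) (hzwκ : z κ ≠ w κ)
    (hxy : strToNat (x κ) < strToNat (y κ) ↔ σ) (hzw : strToNat (z κ) < strToNat (w κ) ↔ σ)
    (hxw : x t = w t) (hyz : y t = z t) (hxyt : x t ≠ y t) : phi x y ≠ phi z w := by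
  intro h
  have hδκ := (phi_eq_iff.1 h).2.2.2 κ
  have hδt := (phi_eq_iff.1 h).2.2.2 t
  have hlt : strToNat (y t) < strToNat (x t) ↔ ¬strToNat (x t) < strToNat (y t) := by
    have := strToNat_injective.ne hxyt
    omega
  simp only [DeltaPos, hxyκ, hzwκ, ← hxw, ← hyz, hxyt, hxyt.symm, false_or, hxy, hzw, hlt]
    at hδκ hδt
  grind

end Coloring

section Separation

variable {N m : ℕ} {v u w p q : Vtx m}

/-- `x` and `y` first differ where `x` leaves `f` (where `y` does, if `x = f`), and `y` agrees
with `f` there. -/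
theorem exists_cross_order {f g g' h h' : Fin N → Bool}
    (hg : firstDiffIdx f g' = firstDiffIdx f g) (hh : firstDiffIdx f h' = firstDiffIdx f h)
    (hlt : firstDiffIdx f g < firstDiffIdx f h) :
    ∃ σ : Prop, ∀ x ∈ ({g, g'} : Set (Fin N → Bool)), ∀ y ∈ ({h, h'} : Set (Fin N → Bool)),
      x ≠ y ∧ (strToNat x < strToNat y ↔ σ) ∧
        firstDiffIdx x y ≠ firstDiffIdx g g' ∧ firstDiffIdx x y ≠ firstDiffIdx h h' := by
  have hfh : f ≠ h := fun e => by simp [firstDiffIdx_eq_zero_iff.2 e] at hlt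
  obtain ⟨t, ht⟩ := exists_isFirstDiff hfh
  have hdiff : ∀ y ∈ ({h, h'} : Set (Fin N → Bool)), IsFirstDiff f y t := by
    rintro y (rfl | rfl)
    exacts [ht, firstDiffIdx_eq_succ_iff.1 (hh.trans ht.firstDiffIdx_eq)]
  have hhh' := firstDiffIdx_eq_zero_or_lt ht (hdiff h' (by simp))
  by_cases hfg : f = g
  · subst hfg
    obtain rfl : f = g' := firstDiffIdx_eq_zero_iff.1 (hg.trans (firstDiffIdx_eq_zero_iff.2 rfl))
    refine ⟨f t = false, fun x hx y hy => ?_⟩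
    obtain rfl : x = f := by simpa using hx
    have hxy := hdiff y hy
    rw [hxy.firstDiffIdx_eq, firstDiffIdx_eq_zero_iff.2 rfl]
    exact ⟨hxy.ne, hxy.strToNat_lt_iff, by simp, by omega⟩
  · obtain ⟨s, hs⟩ := exists_isFirstDiff hfg
    have hgen : ∀ x ∈ ({g, g'} : Set (Fin N → Bool)), IsFirstDiff f x s := by
      rintro x (rfl | rfl)
      exacts [hs, firstDiffIdx_eq_succ_iff.1 (hg.trans hs.firstDiffIdx_eq)]
    have hst : s < t := by
      have := hs.firstDiffIdx_eq ▸ ht.firstDiffIdx_eq ▸ hlt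
      exact Fin.lt_def.2 (by omega)
    have hgg' := firstDiffIdx_eq_zero_or_lt hs (hgen g' (by simp))
    refine ⟨f s = true, fun x hx y hy => ?_⟩
    have hxy := (hgen x hx).fork (hdiff y hy) hst
    rw [hxy.firstDiffIdx_eq, hxy.strToNat_lt_iff, (hgen x hx).apply_eq_not]
    exact ⟨hxy.ne, by simp, by omega, by have := Fin.lt_def.1 hst; omega⟩

/-- What two colour classes `{vu, vw}` and `{vp, vq}` at a vertex `v` force on the four cross
edges. -/
def CrossSeparated (u w p q : Vtx m) : Prop :=
  ∃ κ : Fin m, ∃ σ : Prop, ∀ x ∈ ({u, w} : Set (Vtx m)), ∀ y ∈ ({p, q} : Set (Vtx m)),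
    x κ ≠ y κ ∧ (strToNat (x κ) < strToNat (y κ) ↔ σ) ∧ phi x y ≠ phi u w ∧ phi x y ≠ phi p q

theorem CrossSeparated.symm (h : CrossSeparated u w p q) : CrossSeparated p q u w := by
  obtain ⟨κ, σ, h⟩ := h
  refine ⟨κ, ¬σ, fun x hx y hy => ?_⟩
  obtain ⟨hne, hσ, hpu, hpp⟩ := h y hy x hx
  have := strToNat_injective.ne hne
  refine ⟨hne.symm, by rw [← hσ]; omega, ?_, ?_⟩ <;> rwa [phi_comm]

theorem crossSeparated_of_firstDiffIdx_lt {κ : Fin m} (hu : phi v u = phi v w)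
    (hp : phi v p = phi v q) (hlt : firstDiffIdx (v κ) (u κ) < firstDiffIdx (v κ) (p κ)) :
    CrossSeparated u w p q := by
  obtain ⟨σ, hσ⟩ := exists_cross_order ((phi_eq_iff.1 hu).2.2.1 κ).symm
    ((phi_eq_iff.1 hp).2.2.1 κ).symm hlt
  refine ⟨κ, σ, fun x hx y hy => ?_⟩
  obtain ⟨hne, hord, huw, hpq⟩ := hσ (x κ) (by rcases hx with rfl | rfl <;> simp)
    (y κ) (by rcases hy with rfl | rfl <;> simp)
  exact ⟨hne, hord, fun h => huw ((phi_eq_iff.1 h).2.2.1 κ),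
    fun h => hpq ((phi_eq_iff.1 h).2.2.1 κ)⟩

theorem crossSeparated_of_firstDiffIdx_eq (hvu : v ≠ u) (hvp : v ≠ p) (huw : u ≠ w)
    (hpq : p ≠ q) (hu : phi v u = phi v w) (hp : phi v p = phi v q) (hne : phi v u ≠ phi v p)
    (hall : ∀ k, firstDiffIdx (v k) (u k) = firstDiffIdx (v k) (p k)) :
    CrossSeparated u w p q := by
  obtain ⟨i, hiu, hiw, huwi⟩ := exists_isFirstDiff_of_phi_eq hvu hu
  obtain ⟨j, hjp, hjq, hpqj⟩ := exists_isFirstDiff_of_phi_eq hvp hp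
  have hup : u i ≠ p i := fun h => hne (phi_eq_of_firstDiffIdx_eq hiu h hall)
  obtain rfl : j = i := hjp.unique (hiu.of_firstDiffIdx_eq hall)
  refine ⟨j, strToNat (u j) < strToNat (p j), fun x hx y hy => ?_⟩
  have hx' : x j = u j ∧ IsFirstDiff v x j := by rcases hx with rfl | rfl <;> simp [*]
  have hy' : y j = p j ∧ IsFirstDiff v y j := by rcases hy with rfl | rfl <;> simp [*]
  have hxy : IsFirstDiff x y j := ⟨by rw [hx'.1, hy'.1]; exact hup,
    fun k hk => (hx'.2.2 k hk).symm.trans (hy'.2.2 k hk)⟩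
  refine ⟨hxy.1, by rw [hx'.1, hy'.1], fun h => ?_, fun h => ?_⟩
  · exact firstDiffBlock_ne_of_apply_eq huw huwi
      (by rw [← (phi_eq_iff.1 h).1, hxy.firstDiffBlock_eq])
  · exact firstDiffBlock_ne_of_apply_eq hpq hpqj
      (by rw [← (phi_eq_iff.1 h).1, hxy.firstDiffBlock_eq])

theorem crossSeparated_of_phi_eq (hvu : v ≠ u) (hvp : v ≠ p) (huw : u ≠ w) (hpq : p ≠ q)
    (hu : phi v u = phi v w) (hp : phi v p = phi v q) (hne : phi v u ≠ phi v p) :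
    CrossSeparated u w p q := by
  by_cases hall : ∀ k, firstDiffIdx (v k) (u k) = firstDiffIdx (v k) (p k)
  · exact crossSeparated_of_firstDiffIdx_eq hvu hvp huw hpq hu hp hne hall
  obtain ⟨κ, hκ⟩ := not_forall.1 hall
  rcases lt_or_gt_of_ne hκ with hlt | hlt
  · exact crossSeparated_of_firstDiffIdx_lt hu hp hlt
  · exact (crossSeparated_of_firstDiffIdx_lt hp hu hlt).symm

end Separation

section Configuration

variable {m : ℕ}

theorem false_of_star_two_pairs {v u w p q : Vtx m}
    (hP : IsPairedOn edgeColor (edgesOn {v, u, w, p, q})) (hS : [v, u, w, p, q].Nodup)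
    (hu : phi v u = phi v w) (hp : phi v p = phi v q) (hne : phi v u ≠ phi v p) : False := by
  have hS' := hS
  simp only [List.nodup_cons, List.mem_cons, List.not_mem_nil, or_false, not_or] at hS'
  obtain ⟨⟨hvu, -, hvp, -⟩, ⟨huw, -, -⟩, -, hpq, -⟩ := hS'
  obtain ⟨κ, σ, hsep⟩ := crossSeparated_of_phi_eq hvu hvp huw hpq hu hp hne
  have hκ := fun x hx y hy => (hsep x hx y hy).1
  have hσ := fun x hx y hy => (hsep x hx y hy).2.1
  obtain ⟨hpair, hmatch⟩ := (hP.of_edgesOn_insert hS (by simpa) (by simpa)).cross_pairing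
    (List.nodup_cons.1 hS).2 fun x hx y hy => by simpa using (hsep x hx y hy).2.2
  simp only [edgeColor_mk] at hpair hmatch
  obtain ⟨t, ht⟩ := exists_isFirstDiff huw
  have hblocks := ht.pair_eq_of_phi_eq hpair
  rcases hmatch with ⟨h, -, -⟩ | ⟨h, -, -⟩ | ⟨hupwq, huqwp, -⟩
  · refine phi_ne_of_apply_eq (t := t) (hblocks.imp And.left And.left) ?_ h
    rcases hblocks with ⟨h₁, h₂⟩ | ⟨h₁, h₂⟩ <;> rw [← h₁, ← h₂]
    exacts [ht.1, ht.1.symm]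
  · refine phi_ne_of_apply_eq (t := t) (y := u) (z := w) ?_ ht.1
      (by rwa [phi_comm p u, phi_comm p w])
    exact hblocks.imp (fun h => h.1.symm) (fun h => h.2.symm)
  · rcases hblocks with ⟨hupt, hwqt⟩ | ⟨huqt, hwpt⟩
    · exact phi_ne_of_crossed (hκ u (by simp) q (by simp)) (hκ w (by simp) p (by simp))
        (hσ u (by simp) q (by simp)) (hσ w (by simp) p (by simp)) hupt hwqt.symm
        (hwqt ▸ ht.1) huqwp
    · exact phi_ne_of_crossed (hκ u (by simp) p (by simp)) (hκ w (by simp) q (by simp))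
        (hσ u (by simp) p (by simp)) (hσ w (by simp) q (by simp)) huqt hwpt.symm
        (hwpt ▸ ht.1) hupwq

theorem exists_three_colors {v n₁ n₂ n₃ n₄ : Vtx m}
    (hP : IsPairedOn edgeColor (edgesOn {v, n₁, n₂, n₃, n₄})) (hS : [v, n₁, n₂, n₃, n₄].Nodup) :
    ∃ u ∈ ({v, n₁, n₂, n₃, n₄} : Set (Vtx m)), ∃ w ∈ ({v, n₁, n₂, n₃, n₄} : Set (Vtx m)),
      ∃ z ∈ ({v, n₁, n₂, n₃, n₄} : Set (Vtx m)), u ≠ v ∧ w ≠ v ∧ z ≠ v ∧ u ≠ w ∧ u ≠ z ∧ w ≠ z ∧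
        phi v u ≠ phi v w ∧ phi v u ≠ phi v z ∧ phi v w ≠ phi v z := by
  have hnv : ∀ n ∈ ({n₁, n₂, n₃, n₄} : Set (Vtx m)), n ≠ v := fun n hn h =>
    (List.nodup_cons.1 hS).1 (by simpa [h] using hn)
  by_contra hcon
  have htwo : ∀ a ∈ ({n₁, n₂, n₃, n₄} : Set (Vtx m)), ∀ b ∈ ({n₁, n₂, n₃, n₄} : Set (Vtx m)),
      ∀ c ∈ ({n₁, n₂, n₃, n₄} : Set (Vtx m)), a ≠ b → a ≠ c → b ≠ c →
        edgeColor s(v, a) = edgeColor s(v, b) ∨ edgeColor s(v, a) = edgeColor s(v, c) ∨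
          edgeColor s(v, b) = edgeColor s(v, c) := by
    intro a ha b hb c hc hab hac hbc
    by_contra! h
    exact hcon ⟨a, .inr ha, b, .inr hb, c, .inr hc, hnv a ha, hnv b hb, hnv c hc, hab, hac, hbc,
      by simpa using h⟩
  rcases hP.star_pairs hS htwo with ⟨h₁₂, h₃₄, hne⟩ | ⟨h₁₃, h₂₄, hne⟩ | ⟨h₁₄, h₂₃, hne⟩ <;>
    simp only [edgeColor_mk] at *
  · exact false_of_star_two_pairs hP hS h₁₂ h₃₄ hne
  · refine false_of_star_two_pairs (by rwa [Set.insert_comm n₃ n₂]) ?_ h₁₃ h₂₄ hne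
    exact (((List.Perm.swap n₂ n₃ [n₄]).cons n₁).cons v).nodup_iff.2 hS
  · refine false_of_star_two_pairs (by rwa [Set.insert_comm n₄ n₂, Set.pair_comm n₄ n₃]) ?_
      h₁₄ h₂₃ hne
    exact ((List.perm_middle (l₁ := [n₂, n₃]) (l₂ := [])).symm.cons n₁ |>.cons v).nodup_iff.2 hS

theorem IsConfig22222.isPairedOn {a b c d e : Vtx m} (h : IsConfig22222 a b c d e) :
    IsPairedOn edgeColor (edgesOn {a, b, c, d, e}) := by
  obtain ⟨hab, hac, had, hae, hbc, hbd, hbe, hcd, hce, hde⟩ := h.1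
  set L := (edgeList a b c d e).map fun p => s(p.1, p.2)
  have hL : {f | f ∈ L} = edgesOn {a, b, c, d, e} := by
    refine Set.ext fun f => ⟨fun hf => ?_, fun hf => ?_⟩
    · obtain ⟨p, hp, rfl⟩ := List.mem_map.1 hf
      revert p
      simp [edgeList, *]
    · induction f using Sym2.ind with | h x y => ?_
      obtain ⟨⟨hx, hy⟩, hxy⟩ := mk_mem_edgesOn.1 hf
      simp only [Set.mem_insert_iff, Set.mem_singleton_iff] at hx hy
      rcases hx with rfl | rfl | rfl | rfl | rfl <;> rcases hy with rfl | rfl | rfl | rfl | rfl <;>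
        simp [L, edgeList, Sym2.eq_swap] at hxy ⊢
  rw [← hL]
  refine isPairedOn_of_countP (by simp [L, edgeList, *]) fun col => ?_
  convert h.2 col using 2 <;> simp only [L, colorCount, List.countP_map] <;> rfl

end Configuration

theorem config_vertex_sees_three_colors_general (m : ℕ)
    (a b c d e : Vtx m) (h : IsConfig22222 a b c d e) :
    ∀ v ∈ ({a, b, c, d, e} : Set (Vtx m)),
      ∃ u ∈ ({a, b, c, d, e} : Set (Vtx m)),
        ∃ w ∈ ({a, b, c, d, e} : Set (Vtx m)),
          ∃ z ∈ ({a, b, c, d, e} : Set (Vtx m)),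
            u ≠ v ∧ w ≠ v ∧ z ≠ v ∧ u ≠ w ∧ u ≠ z ∧ w ≠ z ∧
            phi v u ≠ phi v w ∧ phi v u ≠ phi v z ∧ phi v w ≠ phi v z := by
  intro v hv
  obtain ⟨n₁, n₂, n₃, n₄, hS, hnd⟩ :=
    exists_eq_insert_of_mem hv (by simpa [Distinct5, and_assoc] using h.1)
  rw [hS]
  exact exists_three_colors (hS ▸ h.isPairedOn) hnd

/-- In any 2-2-2-2-2 configuration under `φ`, every vertex is incident (within the
configuration) to edges of at least three distinct colors. -/
theorem config_vertex_sees_three_colors (m : ℕ) (hm : 0 < m)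
    (a b c d e : Vtx m) (h : IsConfig22222 a b c d e) :
    ∀ v ∈ ({a, b, c, d, e} : Set (Vtx m)),
      ∃ u ∈ ({a, b, c, d, e} : Set (Vtx m)),
        ∃ w ∈ ({a, b, c, d, e} : Set (Vtx m)),
          ∃ z ∈ ({a, b, c, d, e} : Set (Vtx m)),
            u ≠ v ∧ w ≠ v ∧ z ≠ v ∧ u ≠ w ∧ u ≠ z ∧ w ≠ z ∧
            phi v u ≠ phi v w ∧ phi v u ≠ phi v z ∧ phi v w ≠ phi v z :=
  config_vertex_sees_three_colors_general m a b c d e h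

end CFLS
end

section
/- Let n ≥ 2 and let the edges of the complete bipartite graph K_{n,n} with parts X and Y of size n be colored with at most ⌊n/2⌋ colors. Then there exist distinct vertices x, z ∈ X and distinct vertices u, v ∈ Y such that the edges xu and xv receive the same color and the edges zu and zv receive the same color; in particular, K_{n,n} contains a 4-cycle in which every color appears an even number of times, so g(K_{n,n}, C_4) > n/2. -/
/-!
By Cauchy–Schwarz over the colour classes, a row of `n` edges coloured with at most `n / 2`
colours contains at least `2n` ordered monochromatic pairs `(u, v)`, hence at least `n` with
`u ≠ v`. The `n` rows thus contribute at least `n²` such pairs, more than the `n² - n` ordered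
pairs of distinct vertices of `Y`, so two distinct rows `x, z` share a pair `(u, v)`.
-/

open Finset

section Collisions

variable {α β : Type*} [Fintype α] [Fintype β] [DecidableEq β]

lemma card_filter_apply_eq_eq_sum_sq_card_fiber (g : α → β) :
    #{p : α × α | g p.1 = g p.2} = ∑ b, #{a | g a = b} ^ 2 := by
  rw [card_eq_sum_card_fiberwise (f := fun p => g p.1) (t := univ) fun _ _ => mem_univ _]
  refine sum_congr rfl fun b _ => ?_
  rw [sq, ← card_product]
  congr 1
  ext p
  simp only [mem_filter, mem_product, mem_univ, true_and]
  constructor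
  · rintro ⟨h, rfl⟩; exact ⟨rfl, h.symm⟩
  · rintro ⟨h1, h2⟩; exact ⟨h1.trans h2.symm, h1⟩

lemma sq_card_le_card_mul_card_filter_apply_eq (g : α → β) :
    Fintype.card α ^ 2 ≤ Fintype.card β * #{p : α × α | g p.1 = g p.2} := by
  have hfib : Fintype.card α = ∑ b, #{a | g a = b} :=
    card_eq_sum_card_fiberwise fun _ _ => mem_univ _
  rw [card_filter_apply_eq_eq_sum_sq_card_fiber, hfib]
  exact sq_sum_le_card_mul_sum_sq

lemma card_le_card_offDiag_filter_apply_eq [DecidableEq α] (g : α → β)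
    (h : 2 * Fintype.card β ≤ Fintype.card α) :
    Fintype.card α ≤ #{p ∈ (univ : Finset α).offDiag | g p.1 = g p.2} := by
  have hsplit : #{p : α × α | g p.1 = g p.2}
      = Fintype.card α + #{p ∈ (univ : Finset α).offDiag | g p.1 = g p.2} := by
    rw [← univ_product_univ, ← diag_union_offDiag, filter_union,
      card_union_of_disjoint (disjoint_filter_filter (disjoint_diag_offDiag _)),
      filter_true_of_mem fun p hp => congrArg g (mem_diag.1 hp).2, diag_card, card_univ]
  have := sq_card_le_card_mul_card_filter_apply_eq g
  rw [hsplit] at this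
  nlinarith

end Collisions

lemma exists_ne_mem_of_card_lt_sum_card {ι α : Type*} [DecidableEq α] {s : Finset ι}
    {t : Finset α} {S : ι → Finset α} (hS : ∀ i ∈ s, S i ⊆ t)
    (h : #t < ∑ i ∈ s, #(S i)) : ∃ i ∈ s, ∃ j ∈ s, i ≠ j ∧ ∃ a, a ∈ S i ∧ a ∈ S j := by
  by_contra! hdisj
  have hpair : (s : Set ι).PairwiseDisjoint S := fun i hi j hj hij =>
    disjoint_left.2 fun a hai haj => hdisj i hi j hj hij a hai haj
  have := card_le_card (biUnion_subset.2 hS)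
  rw [card_biUnion hpair] at this
  omega

/-- If the edges of `K_{n,n}` (with parts indexed by `Fin n`, edge `xu` for `x` in `X`
and `u` in `Y` colored `c x u`) are colored with at most `⌊n/2⌋` colors, then there are
distinct `x, z` in `X` and distinct `u, v` in `Y` with `c x u = c x v` and
`c z u = c z v`; in particular the 4-cycle `x u z v` sees every color an even number of
times, so `g(K_{n,n}, C_4) > n/2`. -/
theorem g_Knn_C4_gt_half (n k : ℕ) (hn : 2 ≤ n) (hk : k ≤ n / 2)
    (c : Fin n → Fin n → Fin k) :
    ∃ x z u v : Fin n, x ≠ z ∧ u ≠ v ∧ c x u = c x v ∧ c z u = c z v := by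
  let S x : Finset (Fin n × Fin n) := {p ∈ univ.offDiag | c x p.1 = c x p.2}
  have hrow x : n ≤ #(S x) := by
    simpa using card_le_card_offDiag_filter_apply_eq (c x) (by simpa using (by omega : 2 * k ≤ n))
  have hlt : #(univ : Finset (Fin n)).offDiag < ∑ x, #(S x) :=
    calc #(univ : Finset (Fin n)).offDiag = n * n - n := by simp [offDiag_card]
      _ < ∑ _x : Fin n, n := by
        rw [sum_const, card_univ, Fintype.card_fin, smul_eq_mul]
        exact Nat.sub_lt (by positivity) (by omega)
      _ ≤ ∑ x, #(S x) := sum_le_sum fun x _ => hrow x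
  obtain ⟨x, -, z, -, hxz, ⟨u, v⟩, hx, hz⟩ :=
    exists_ne_mem_of_card_lt_sum_card (fun x _ => filter_subset _ _) hlt
  simp only [mem_filter, mem_offDiag] at hx hz
  exact ⟨x, z, u, v, hxz, hx.1.2.2, hx.2, hz.2⟩
end
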